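/- For every ε ∈ (0, 1) there exists a symmetric positive semidefinite matrix K ∈ ℝ^{3×3} with the following property. Let C ∈ ℝ^{3×2} consist of the first two columns of K and let W ∈ ℝ^{2×2} be the leading 2×2 principal submatrix of K. Let W_(1) denote a best rank-1 approximation of W (obtained from the top eigenpair of W), and let G^{nys} = C (W_(1))† Cᵀ be the standard rank-1 Nyström approximation; let G^{opt} be a best rank-1 approximation (in Frobenius norm) of the matrix C W† Cᵀ. Then ‖K − G^{nys}‖_F / ‖K‖_F ≥ 1 − ε while ‖K − G^{opt}‖_F / ‖K‖_F ≤ ε. -/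

import Mathlib

/-! Take `K = e₀e₀ᵀ + ½ vvᵀ` with `v = (0, 1, m)`. The landmark block is `W = diag(1, ½)`, and the
only rank-one matrix within `½` of it is `diag(1, 0)`, so the rank-one Nyström approximation is
`e₀e₀ᵀ` and misses the whole block `½ vvᵀ`, of norm `T = (1 + m²)/2`. On the other hand `W` is
invertible and `C W⁻¹ Cᵀ = K`, so the competitor `½ vvᵀ` shows that `G^{opt}` is within `1` of
`K`. Since `‖K‖_F = √(1 + T²)`, both relative errors are controlled once `εT ≥ 1`, e.g. for
`m = 1/ε`. Pseudo-inverses are identified through the uniqueness of the Moore–Penrose inverse. -/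

open Matrix

/-- Frobenius norm of a real matrix. -/
noncomputable def frobNorm {a b : ℕ} (A : Matrix (Fin a) (Fin b) ℝ) : ℝ :=
  Real.sqrt (∑ i, ∑ j, (A i j) ^ 2)

/-- `Wd` is the Moore–Penrose pseudo-inverse of `W` (the four Penrose conditions). -/
def IsMoorePenrose {a : ℕ} (W Wd : Matrix (Fin a) (Fin a) ℝ) : Prop :=
  W * Wd * W = W ∧ Wd * W * Wd = Wd ∧ (W * Wd)ᵀ = W * Wd ∧ (Wd * W)ᵀ = Wd * W


lemma frobNorm_le_iff {a b : ℕ} {A : Matrix (Fin a) (Fin b) ℝ} {c : ℝ} (hc : 0 ≤ c) :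
    frobNorm A ≤ c ↔ ∑ i, ∑ j, A i j ^ 2 ≤ c ^ 2 :=
  Real.sqrt_le_left hc

lemma frobNorm_eq_of_sum_sq_eq {a b : ℕ} {A : Matrix (Fin a) (Fin b) ℝ} {c : ℝ} (hc : 0 ≤ c)
    (h : ∑ i, ∑ j, A i j ^ 2 = c ^ 2) : frobNorm A = c := by
  rw [frobNorm, h, Real.sqrt_sq hc]

namespace IsMoorePenrose

variable {a : ℕ} {A X Y : Matrix (Fin a) (Fin a) ℝ}

theorem unique (hX : IsMoorePenrose A X) (hY : IsMoorePenrose A Y) : X = Y := by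
  obtain ⟨hAXA, hXAX, hAX, hXA⟩ := hX
  obtain ⟨hAYA, hYAY, hAY, hYA⟩ := hY
  have hAY' : Aᵀ * (A * Y) = Aᵀ := by
    rw [← hAY, ← transpose_mul, hAYA]
  have hXA' : X * A * Aᵀ = Aᵀ := by
    rw [← hXA, ← transpose_mul, ← mul_assoc, hAXA]
  calc X = X * (A * X)ᵀ := by rw [hAX, ← mul_assoc, hXAX]
    _ = X * Xᵀ * (Aᵀ * (A * Y)) := by rw [hAY', transpose_mul, mul_assoc]
    _ = X * (A * X)ᵀ * A * Y := by rw [transpose_mul]; simp only [mul_assoc]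
    _ = X * A * Y := by rw [hAX]; simp only [← mul_assoc, hXAX]
    _ = X * A * (Y * A)ᵀ * Y := by rw [hYA, mul_assoc _ (Y * A), hYAY]
    _ = X * A * Aᵀ * Yᵀ * Y := by rw [transpose_mul]; simp only [mul_assoc]
    _ = (Y * A)ᵀ * Y := by rw [hXA', transpose_mul]
    _ = Y := by rw [hYA, hYAY]

theorem of_mul_eq_one (h : A * X = 1) : IsMoorePenrose A X := by
  have h' : X * A = 1 := mul_eq_one_comm.mp h
  exact ⟨by rw [h, one_mul], by rw [h', one_mul], by rw [h, transpose_one],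
    by rw [h', transpose_one]⟩

theorem self_of_transpose_eq_of_mul_self_eq (hsymm : Aᵀ = A) (hidem : A * A = A) :
    IsMoorePenrose A A :=
  ⟨by rw [hidem, hidem], by rw [hidem, hidem], by rw [hidem, hsymm], by rw [hidem, hsymm]⟩

end IsMoorePenrose

lemma rank_diag_one_zero_le_one : (!![1, 0; 0, 0] : Matrix (Fin 2) (Fin 2) ℝ).rank ≤ 1 := by
  have h : (!![1, 0; 0, 0] : Matrix (Fin 2) (Fin 2) ℝ) = vecMulVec ![1, 0] ![1, 0] := by
    ext i j; fin_cases i <;> fin_cases j <;> simp [vecMulVec_apply]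
  rw [h]
  exact rank_vecMulVec_le _ _

lemma eq_of_rank_le_one_of_forall_frobNorm_sub_le {B : Matrix (Fin 2) (Fin 2) ℝ}
    (hrank : B.rank ≤ 1)
    (hopt : ∀ A : Matrix (Fin 2) (Fin 2) ℝ, A.rank ≤ 1 →
      frobNorm (!![1, 0; 0, 1 / 2] - B) ≤ frobNorm (!![1, 0; 0, 1 / 2] - A)) :
    B = !![1, 0; 0, 0] := by
  have hdet : B 0 0 * B 1 1 - B 0 1 * B 1 0 = 0 := by
    rw [← det_fin_two]
    by_contra hne
    have := rank_of_det_ne_zero hne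
    rw [Fintype.card_fin] at this
    omega
  have hB : frobNorm (!![1, 0; 0, 1 / 2] - B) ≤ 1 / 2 := by
    refine (hopt _ rank_diag_one_zero_le_one).trans_eq (frobNorm_eq_of_sum_sq_eq (by norm_num) ?_)
    simp [Fin.sum_univ_two]
  rw [frobNorm_le_iff (by norm_num)] at hB
  simp only [one_div, Matrix.sub_apply, of_apply, cons_val', cons_val_fin_one, Fin.sum_univ_two,
    Fin.isValue, cons_val_zero, cons_val_one, zero_sub, even_two, Even.neg_pow, inv_pow] at hB
  -- `det B = 0` gives `2 |B₀₀ B₁₁| ≤ B₀₁² + B₁₀²`, which with `hB` leaves no room for `B₁₁ ≠ 0`.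
  have hd : B 1 1 = 0 := by
    nlinarith [sq_nonneg (1 - B 0 0), sq_nonneg (B 0 1), sq_nonneg (B 1 0),
        sq_nonneg (B 1 1), sq_nonneg (B 0 0 + B 1 1 - 1), sq_nonneg (B 0 1 - B 1 0)]
  rw [hd] at hB
  have ha : B 0 0 = 1 := by nlinarith [sq_nonneg (1 - B 0 0), sq_nonneg (B 0 1), sq_nonneg (B 1 0)]
  have hb : B 0 1 = 0 := by nlinarith [sq_nonneg (1 - B 0 0), sq_nonneg (B 0 1), sq_nonneg (B 1 0)]
  have hc : B 1 0 = 0 := by nlinarith [sq_nonneg (1 - B 0 0), sq_nonneg (B 0 1), sq_nonneg (B 1 0)]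
  rw [eta_fin_two B, ha, hb, hc, hd]

lemma one_sub_le_div_sqrt_one_add_sq {ε T : ℝ} (hε : 0 < ε) (hT : 1 ≤ ε * T) :
    1 - ε ≤ T / √(1 + T ^ 2) := by
  have hT0 : 0 < T := pos_of_mul_pos_right (one_pos.trans_le hT) hε.le
  have hN : √(1 + T ^ 2) ≤ 1 + T := by
    rw [Real.sqrt_le_left (by positivity)]; nlinarith
  rw [le_div_iff₀ (by positivity)]
  rcases le_total ε 1 with h | h
  · nlinarith [mul_le_mul_of_nonneg_left hN (sub_nonneg.mpr h)]
  · nlinarith [Real.sqrt_nonneg (1 + T ^ 2)]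

lemma one_div_sqrt_one_add_sq_le {ε T : ℝ} (hε : 0 < ε) (hT : 1 ≤ ε * T) :
    1 / √(1 + T ^ 2) ≤ ε := by
  have hN : T ≤ √(1 + T ^ 2) := Real.le_sqrt_of_sq_le (by linarith)
  rw [div_le_iff₀ (by positivity)]
  nlinarith [mul_le_mul_of_nonneg_left hN hε.le]

noncomputable def toyKernel (m : ℝ) : Matrix (Fin 3) (Fin 3) ℝ :=
  !![1, 0, 0; 0, 1 / 2, m / 2; 0, m / 2, m ^ 2 / 2]

lemma toyKernel_posSemidef (m : ℝ) : (toyKernel m).PosSemidef := by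
  have h : toyKernel m = (!![1, 0, 0; 0, 1 / 2, m / 2; 0, 1 / 2, m / 2])ᴴ *
      !![1, 0, 0; 0, 1 / 2, m / 2; 0, 1 / 2, m / 2] := by
    ext i j
    fin_cases i <;> fin_cases j <;> simp [toyKernel, mul_apply, Fin.sum_univ_three] <;> ring
  rw [h]
  exact posSemidef_conjTranspose_mul_self _

lemma toy_mul_pinv_mul_transpose_eq_toyKernel (m : ℝ) :
    !![1, 0; 0, 1 / 2; 0, m / 2] * !![(1 : ℝ), 0; 0, 2] * (!![1, 0; 0, 1 / 2; 0, m / 2])ᵀ =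
      toyKernel m := by
  ext i j; fin_cases i <;> fin_cases j <;> simp [toyKernel, mul_apply, Fin.sum_univ_two] <;> ring

lemma toy_mul_rank_one_pinv_mul_transpose_eq (m : ℝ) :
    !![1, 0; 0, 1 / 2; 0, m / 2] * !![(1 : ℝ), 0; 0, 0] * (!![1, 0; 0, 1 / 2; 0, m / 2])ᵀ =
      !![(1 : ℝ), 0, 0; 0, 0, 0; 0, 0, 0] := by
  ext i j; fin_cases i <;> fin_cases j <;> simp [mul_apply, Fin.sum_univ_two]

lemma rank_toyKernel_sub_le (m : ℝ) :
    (toyKernel m - !![1, 0, 0; 0, 0, 0; 0, 0, 0]).rank ≤ 1 := by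
  have h : toyKernel m - !![1, 0, 0; 0, 0, 0; 0, 0, 0] =
      vecMulVec ![0, 1, m] ![0, 1 / 2, m / 2] := by
    ext i j; fin_cases i <;> fin_cases j <;> simp [toyKernel, vecMulVec_apply] <;> ring
  rw [h]
  exact rank_vecMulVec_le _ _

lemma frobNorm_toyKernel (m : ℝ) : frobNorm (toyKernel m) = √(1 + ((1 + m ^ 2) / 2) ^ 2) := by
  rw [frobNorm]
  congr 1
  simp only [toyKernel, Fin.sum_univ_three, of_apply, cons_val', cons_val_zero,
    cons_val_one, cons_val, cons_val_fin_one]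
  ring

lemma frobNorm_toyKernel_sub (m : ℝ) :
    frobNorm (toyKernel m - !![1, 0, 0; 0, 0, 0; 0, 0, 0]) = (1 + m ^ 2) / 2 := by
  refine frobNorm_eq_of_sum_sq_eq (by positivity) ?_
  simp only [toyKernel, Fin.sum_univ_three, of_apply, Matrix.sub_apply, cons_val', cons_val_zero,
    cons_val_one, cons_val, cons_val_fin_one]
  ring

/-- toy example, Section 4.1: for every `ε ∈ (0, 1)` there is a `3×3` SPSD
matrix `K` such that, taking `C` to be its first two columns and `W` its leading `2×2`
principal submatrix, the standard rank-1 Nyström approximation `C (W_(1))† Cᵀ` has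
relative Frobenius error at least `1 − ε`, while any best rank-1 approximation `G^{opt}`
of `C W† Cᵀ` has relative error at most `ε`. -/
theorem standard_nystrom_can_be_arbitrarily_bad :
    ∀ ε : ℝ, ε ∈ Set.Ioo (0 : ℝ) 1 →
    ∃ K : Matrix (Fin 3) (Fin 3) ℝ, K.PosSemidef ∧
      ∀ C : Matrix (Fin 3) (Fin 2) ℝ,
        (∀ (i : Fin 3) (j : Fin 2), C i j = K i (Fin.castLE (by norm_num) j)) →
      ∀ W : Matrix (Fin 2) (Fin 2) ℝ,
        (∀ i j : Fin 2,
          W i j = K (Fin.castLE (by norm_num) i) (Fin.castLE (by norm_num) j)) →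
      -- W₍₁₎ : a best rank-1 approximation of W (from the top eigenpair)
      ∀ W1 : Matrix (Fin 2) (Fin 2) ℝ, W1.rank ≤ 1 →
        (∀ A : Matrix (Fin 2) (Fin 2) ℝ, A.rank ≤ 1 →
          frobNorm (W - W1) ≤ frobNorm (W - A)) →
      -- its Moore–Penrose pseudo-inverse
      ∀ W1d : Matrix (Fin 2) (Fin 2) ℝ, IsMoorePenrose W1 W1d →
      -- the Moore–Penrose pseudo-inverse of W itself
      ∀ Wd : Matrix (Fin 2) (Fin 2) ℝ, IsMoorePenrose W Wd →
      -- G^{opt} : a best rank-1 approximation of C W† Cᵀ in Frobenius norm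
      ∀ Gopt : Matrix (Fin 3) (Fin 3) ℝ, Gopt.rank ≤ 1 →
        (∀ A : Matrix (Fin 3) (Fin 3) ℝ, A.rank ≤ 1 →
          frobNorm (C * Wd * Cᵀ - Gopt) ≤ frobNorm (C * Wd * Cᵀ - A)) →
      1 - ε ≤ frobNorm (K - C * W1d * Cᵀ) / frobNorm K ∧
        frobNorm (K - Gopt) / frobNorm K ≤ ε := by
  rintro ε ⟨hε, -⟩
  have hT : 1 ≤ ε * ((1 + (1 / ε) ^ 2) / 2) := by
    field_simp; nlinarith [sq_nonneg (ε - 1)]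
  set m := 1 / ε
  refine ⟨toyKernel m, toyKernel_posSemidef m, ?_⟩
  rintro C hC W hW W1 hW1 hW1opt W1d hW1d Wd hWd Gopt - hGopt
  obtain rfl : C = !![1, 0; 0, 1 / 2; 0, m / 2] := by
    ext i j; fin_cases i <;> fin_cases j <;> exact hC _ _
  obtain rfl : W = !![1, 0; 0, 1 / 2] := by
    ext i j; fin_cases i <;> fin_cases j <;> exact hW _ _
  obtain rfl := eq_of_rank_le_one_of_forall_frobNorm_sub_le hW1 hW1opt
  obtain rfl := hW1d.unique (.self_of_transpose_eq_of_mul_self_eq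
    (by ext i j; fin_cases i <;> fin_cases j <;> rfl)
    (by ext i j; fin_cases i <;> fin_cases j <;> simp [mul_apply]))
  obtain rfl := hWd.unique (.of_mul_eq_one (X := !![1, 0; 0, 2]) (by simp [one_fin_two]))
  rw [toy_mul_pinv_mul_transpose_eq_toyKernel] at hGopt
  have hGopt' : frobNorm (toyKernel m - Gopt) ≤ 1 := by
    refine (hGopt _ (rank_toyKernel_sub_le m)).trans_eq ?_
    rw [sub_sub_cancel]
    exact frobNorm_eq_of_sum_sq_eq zero_le_one (by simp [Fin.sum_univ_three])
  rw [toy_mul_rank_one_pinv_mul_transpose_eq, frobNorm_toyKernel_sub, frobNorm_toyKernel]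
  exact ⟨one_sub_le_div_sqrt_one_add_sq hε hT,
    (div_le_div_of_nonneg_right hGopt' (Real.sqrt_nonneg _)).trans
      (one_div_sqrt_one_add_sq_le hε hT)⟩
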